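/- arXiv:1506.03423 — 3 statements merged into one kernel-verified Lean document; each statement's English description precedes it below -/
import Mathlib

section
/- Let k > d ≥ 2 and let x_1 < x_2 < ... < x_k be real numbers. Suppose Q is a real polynomial of degree d that is extremal for (d, {x_1,...,x_k}). Then for any two real numbers r < r' that are consecutive roots of Q (i.e., Q(r) = Q(r') = 0 and Q has no root strictly between r and r'), there exists i ∈ {1,...,k} with r < x_i < r' and |Q(x_i)| = 1. -/
/-- `Q` is extremal for `(d, {x 0, ..., x (k-1)})`: it has degree `d`, is bounded in absolute
value by `1` on the points `x i`, and its leading coefficient is maximal among all degree `d`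
polynomials bounded in absolute value by `1` on the points `x i`. -/
def IsExtremal (d : ℕ) {k : ℕ} (x : Fin k → ℝ) (Q : Polynomial ℝ) : Prop :=
  Q.natDegree = d ∧ (∀ i : Fin k, |Q.eval (x i)| ≤ 1) ∧
    ∀ R : Polynomial ℝ, R.natDegree = d → (∀ i : Fin k, |R.eval (x i)| ≤ 1) →
      R.leadingCoeff ≤ Q.leadingCoeff

/-!
Write `Q = (X - r) (X - r') g`. If no node in `(r, r')` has `|Q| = 1`, then every node with
`|Q| = 1` lies outside `[r, r']`, where `p = (X - r) (X - r')` is positive. Replacing `Q` by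
`(p - ε) g` strictly decreases `|Q|` at those nodes and keeps `|Q| < 1` at the others, so for
small `ε > 0` the polynomial `Q - ε g` is strictly below `1` at every node. It has the same
degree and leading coefficient as `Q`, and rescaling it by a factor `t > 1` would give an
admissible polynomial with a larger leading coefficient.
-/

open Polynomial Filter Topology

lemma exists_gt_forall_abs_mul_le {ι : Type*} [Finite ι] {a : ι → ℝ} {t₀ : ℝ}
    (h : ∀ i, |t₀ * a i| < 1) : ∃ t > t₀, ∀ i, |t * a i| ≤ 1 := by
  have hnear : ∀ᶠ t in 𝓝 t₀, ∀ i, |t * a i| < 1 :=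
    eventually_all.2 fun i =>
      ((continuous_id.mul continuous_const).abs.tendsto t₀).eventually (gt_mem_nhds (h i))
  obtain ⟨t, ht, ht₀⟩ := ((hnear.filter_mono nhdsWithin_le_nhds).and
    (self_mem_nhdsWithin (s := Set.Ioi t₀))).exists
  exact ⟨t, ht₀, fun i => (ht i).le⟩

lemma Polynomial.exists_eq_X_sub_C_mul_X_sub_C_mul {K : Type*} [Field K] {Q : K[X]} {r r' : K}
    (hne : r ≠ r') (hr : Q.IsRoot r) (hr' : Q.IsRoot r') :
    ∃ g, Q = (X - C r) * (X - C r') * g :=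
  (isCoprime_X_sub_C_of_isUnit_sub (sub_ne_zero.2 hne).isUnit).mul_dvd
    (dvd_iff_isRoot.2 hr) (dvd_iff_isRoot.2 hr')

lemma eventually_abs_eval_mul_sub_C_mul_lt {P g : ℝ[X]} {y : ℝ} (hle : |(P * g).eval y| ≤ 1)
    (hpos : |(P * g).eval y| = 1 → 0 < P.eval y) :
    ∀ᶠ ε in 𝓝[>] 0, |(P * g - C ε * g).eval y| < 1 := by
  have heval : ∀ ε, (P * g - C ε * g).eval y = (P.eval y - ε) * g.eval y := by
    intro ε
    simp only [eval_sub, eval_mul, eval_C]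
    ring
  simp only [heval]
  rcases hle.lt_or_eq with hlt | heq
  · refine Eventually.filter_mono nhdsWithin_le_nhds ?_
    refine (((continuous_const.sub continuous_id).mul continuous_const).abs.tendsto
      (0 : ℝ)).eventually (gt_mem_nhds ?_)
    simpa using hlt
  · have hP := hpos heq
    rw [eval_mul, abs_mul, abs_of_pos hP] at heq
    have hg : 0 < |g.eval y| := by
      by_contra! h
      nlinarith [abs_nonneg (g.eval y)]
    filter_upwards [Ioo_mem_nhdsGT hP] with ε hε
    rw [abs_mul, abs_of_pos (sub_pos.2 hε.2)]
    nlinarith [hε.1]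

namespace IsExtremal

variable {d k : ℕ} {x : Fin k → ℝ} {Q : ℝ[X]}

lemma leadingCoeff_pos (hQ : IsExtremal d x Q) : 0 < Q.leadingCoeff := by
  obtain ⟨ε, hε, hbound⟩ :=
    exists_gt_forall_abs_mul_le (a := fun i => x i ^ d) (t₀ := 0) (by simp)
  have hdeg : (C ε * X ^ d).natDegree = d := by
    rw [natDegree_C_mul hε.ne', natDegree_X_pow]
  have := hQ.2.2 (C ε * X ^ d) hdeg (by simpa using hbound)
  rw [leadingCoeff_C_mul_X_pow] at this
  linarith

lemma leadingCoeff_lt_of_abs_eval_lt (hQ : IsExtremal d x Q) {R : ℝ[X]} (hR : R.natDegree = d)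
    (hlt : ∀ i, |R.eval (x i)| < 1) : R.leadingCoeff < Q.leadingCoeff := by
  by_contra! hle
  obtain ⟨t, ht, hbound⟩ :=
    exists_gt_forall_abs_mul_le (a := fun i => R.eval (x i)) (t₀ := 1) (by simpa using hlt)
  have htR : (C t * R).natDegree = d := by
    rw [natDegree_C_mul (by linarith), hR]
  have := hQ.2.2 (C t * R) htR (by simpa using hbound)
  rw [leadingCoeff_mul, leadingCoeff_C] at this
  nlinarith [hQ.leadingCoeff_pos]

lemma not_forall_abs_eval_sub_lt (hQ : IsExtremal d x Q) {S : ℝ[X]} (hS : S.natDegree < d) :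
    ¬ ∀ i, |(Q - S).eval (x i)| < 1 := by
  rw [← hQ.1] at hS
  intro hlt
  have := hQ.leadingCoeff_lt_of_abs_eval_lt ((natDegree_sub_eq_left_of_natDegree_lt hS).trans hQ.1)
    hlt
  rw [leadingCoeff_sub_of_degree_lt (degree_lt_degree hS)] at this
  exact this.false

end IsExtremal

theorem stmt_11_general (d k : ℕ) (x : Fin k → ℝ)
    (Q : Polynomial ℝ) (hQ : IsExtremal d x Q) :
    ∀ r r' : ℝ, r < r' → Q.IsRoot r → Q.IsRoot r' →
      (∀ t : ℝ, r < t → t < r' → ¬ Q.IsRoot t) →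
      ∃ i : Fin k, r < x i ∧ x i < r' ∧ |Q.eval (x i)| = 1 := by
  intro r r' hrr' hr hr' _
  by_contra! hcon
  obtain ⟨g, rfl⟩ := exists_eq_X_sub_C_mul_X_sub_C_mul hrr'.ne hr hr'
  have hpos : ∀ i, |((X - C r) * (X - C r') * g).eval (x i)| = 1 →
      0 < ((X - C r) * (X - C r')).eval (x i) := by
    intro i h1
    have hne : ((X - C r) * (X - C r')).eval (x i) ≠ 0 := by
      intro h0
      rw [eval_mul, h0, zero_mul, abs_zero] at h1
      exact zero_ne_one h1
    simp only [eval_mul, eval_sub, eval_X, eval_C] at hne ⊢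
    by_contra! hnpos
    exact hcon i (by nlinarith [hne.lt_of_le hnpos]) (by nlinarith [hne.lt_of_le hnpos]) h1
  obtain ⟨ε, hsmall⟩ := (eventually_all.2 fun i =>
    eventually_abs_eval_mul_sub_C_mul_lt (hQ.2.1 i) (hpos i)).exists
  have hQ0 : (X - C r) * (X - C r') * g ≠ 0 := hQ.leadingCoeff_pos.ne' ∘ leadingCoeff_eq_zero.2
  have hg : g.natDegree < d := by
    rw [← hQ.1, natDegree_mul (left_ne_zero_of_mul hQ0) (right_ne_zero_of_mul hQ0),
      natDegree_mul (X_sub_C_ne_zero r) (X_sub_C_ne_zero r'), natDegree_X_sub_C,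
      natDegree_X_sub_C]
    omega
  exact hQ.not_forall_abs_eval_sub_lt ((natDegree_C_mul_le ε g).trans_lt hg) hsmall

theorem stmt_11 (d k : ℕ) (hd : 2 ≤ d) (hdk : d < k) (x : Fin k → ℝ) (hx : StrictMono x)
    (Q : Polynomial ℝ) (hQ : IsExtremal d x Q) :
    ∀ r r' : ℝ, r < r' → Q.IsRoot r → Q.IsRoot r' →
      (∀ t : ℝ, r < t → t < r' → ¬ Q.IsRoot t) →
      ∃ i : Fin k, r < x i ∧ x i < r' ∧ |Q.eval (x i)| = 1 :=
  stmt_11_general d k x Q hQ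
end

section
/- Let k > d ≥ 2 and let x_1 < x_2 < ... < x_k be real numbers. If Q and Q' are both real polynomials of degree d that are extremal for (d, {x_1,...,x_k}), then Q = Q'. That is, the degree d polynomial with maximum leading coefficient among polynomials of degree d bounded in absolute value by 1 on {x_1,...,x_k} is unique. -/
open Polynomial

lemma lc_pos (d k : ℕ) (hd : 1 ≤ d) (hdk : d < k) (x : Fin k → ℝ)
    (Q : Polynomial ℝ) (hQ : IsExtremal d x Q) : 0 < Q.leadingCoeff := by
  have hk : 0 < k := lt_of_le_of_lt (Nat.zero_le d) hdk
  set g : Polynomial ℝ := ∏ i : Fin d, (X - C (x (Fin.castLE hdk.le i))) with hg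
  have hgm : g.Monic := monic_prod_of_monic _ _ (fun i _ => monic_X_sub_C _)
  have hgd : g.natDegree = d := by
    rw [hg, natDegree_prod_of_monic _ _ (fun i _ => monic_X_sub_C _)]
    simp
  have hne : (Finset.univ : Finset (Fin k)).Nonempty := by
    exact Finset.univ_nonempty_iff.mpr ⟨⟨0, hk⟩⟩
  set B : ℝ := Finset.univ.sup' hne (fun i => |g.eval (x i)|) with hB
  have hB0 : 0 ≤ B := le_trans (abs_nonneg (g.eval (x ⟨0, hk⟩)))
    (Finset.le_sup' (fun i => |g.eval (x i)|) (Finset.mem_univ (⟨0, hk⟩ : Fin k)))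
  set δ : ℝ := 1 / (B + 1) with hδ
  have hδ0 : 0 < δ := by positivity
  have key := hQ.2.2 (C δ * g) ?_ ?_
  · calc (0:ℝ) < δ := hδ0
      _ = (C δ * g).leadingCoeff := by
          rw [leadingCoeff_mul, leadingCoeff_C, hgm.leadingCoeff, mul_one]
      _ ≤ Q.leadingCoeff := key
  · rw [natDegree_C_mul (ne_of_gt hδ0), hgd]
  · intro i
    have h1 : |g.eval (x i)| ≤ B := Finset.le_sup' (fun i => |g.eval (x i)|) (Finset.mem_univ i)
    rw [eval_mul, eval_C, abs_mul, abs_of_pos hδ0]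
    rw [hδ, div_mul_eq_mul_div, one_mul, div_le_one (by linarith)]
    linarith

lemma many_points (d k : ℕ) (hd : 1 ≤ d) (hdk : d < k) (x : Fin k → ℝ)
    (Q : Polynomial ℝ) (hQ : IsExtremal d x Q) :
    d + 1 ≤ (Finset.univ.filter (fun i : Fin k => |Q.eval (x i)| = 1)).card := by
  have hk : 0 < k := lt_of_le_of_lt (Nat.zero_le d) hdk
  have hc : 0 < Q.leadingCoeff := lc_pos d k hd hdk x Q hQ
  by_contra hcon
  push_neg at hcon
  set S := Finset.univ.filter (fun i : Fin k => |Q.eval (x i)| = 1) with hS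
  have hScard : S.card ≤ d := Nat.lt_succ_iff.mp hcon
  set h : Polynomial ℝ := (∏ i ∈ S, (X - C (x i))) * (X - C (x ⟨0, hk⟩)) ^ (d - S.card) with hh
  have hhm : h.Monic :=
    (monic_prod_of_monic _ _ (fun i _ => monic_X_sub_C _)).mul ((monic_X_sub_C _).pow _)
  have hhd : h.natDegree = d := by
    rw [hh, Monic.natDegree_mul (monic_prod_of_monic _ _ (fun i _ => monic_X_sub_C _))
      ((monic_X_sub_C _).pow _),
      natDegree_prod_of_monic _ _ (fun i _ => monic_X_sub_C _), natDegree_pow,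
      natDegree_X_sub_C]
    simp only [natDegree_X_sub_C, Finset.sum_const, smul_eq_mul, mul_one]
    omega
  -- complement nonempty
  have hScne : Sᶜ.Nonempty := by
    rw [← Finset.card_pos, Finset.card_compl]
    simp only [Fintype.card_fin]
    omega
  set f : Fin k → ℝ := fun i => (1 - |Q.eval (x i)|) / (|h.eval (x i)| + 1) with hf
  set ε : ℝ := Sᶜ.inf' hScne f with hε
  have hQlt : ∀ i ∈ Sᶜ, |Q.eval (x i)| < 1 := by
    intro i hi
    rcases lt_or_eq_of_le (hQ.2.1 i) with h1 | h1
    · exact h1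
    · exfalso; rw [Finset.mem_compl, hS] at hi; exact hi (by simp [h1])
  have hε0 : 0 < ε := by
    rw [hε]
    apply Finset.lt_inf'_iff _ |>.mpr
    intro i hi
    have h1 := hQlt i hi
    show 0 < (1 - |Q.eval (x i)|) / (|h.eval (x i)| + 1)
    exact div_pos (by linarith) (by positivity)
  have hεle : ∀ i ∈ Sᶜ, ε ≤ f i := fun i hi => Finset.inf'_le _ hi
  set R : Polynomial ℝ := Q + C ε * h with hR
  have hRd : R.coeff d = Q.leadingCoeff + ε := by
    have h1 : h.coeff d = 1 := by rw [← hhd]; exact hhm.coeff_natDegree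
    rw [hR, coeff_add, coeff_C_mul, h1, mul_one, Polynomial.leadingCoeff, hQ.1]
  have hRnd : R.natDegree = d := by
    have h1 : R.natDegree ≤ d := by
      apply le_trans (natDegree_add_le _ _)
      simp only [max_le_iff]
      exact ⟨le_of_eq hQ.1, le_trans (natDegree_C_mul_le _ _) (le_of_eq hhd)⟩
    have h2 : d ≤ R.natDegree := le_natDegree_of_ne_zero (by rw [hRd]; positivity)
    omega
  have hRlc : R.leadingCoeff = Q.leadingCoeff + ε := by
    rw [Polynomial.leadingCoeff, hRnd, hRd]
  have hRbd : ∀ i : Fin k, |R.eval (x i)| ≤ 1 := by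
    intro i
    by_cases hi : i ∈ S
    · have hz : h.eval (x i) = 0 := by
        rw [hh, eval_mul, eval_prod]
        have : (X - C (x i)).eval (x i) = 0 := by simp
        rw [Finset.prod_eq_zero hi this, zero_mul]
      rw [hR, eval_add, eval_mul, hz, mul_zero, add_zero]
      exact hQ.2.1 i
    · have hi' : i ∈ Sᶜ := Finset.mem_compl.mpr hi
      have h1 := hQlt i hi'
      have h2 := hεle i hi'
      rw [hf] at h2
      have h3 : |h.eval (x i)| + 1 > 0 := by positivity
      have h2' : ε ≤ (1 - |Q.eval (x i)|) / (|h.eval (x i)| + 1) := h2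
      have h4 : ε * |h.eval (x i)| ≤ 1 - |Q.eval (x i)| := by
        have h5 := (le_div_iff₀ h3).mp h2'
        nlinarith [abs_nonneg (h.eval (x i)), hε0.le]
      calc |R.eval (x i)| ≤ |Q.eval (x i)| + |ε * h.eval (x i)| := by
            rw [hR, eval_add, eval_mul, eval_C]; exact abs_add_le _ _
        _ = |Q.eval (x i)| + ε * |h.eval (x i)| := by rw [abs_mul, abs_of_pos hε0]
        _ ≤ 1 := by linarith
  have := hQ.2.2 R hRnd hRbd
  rw [hRlc] at this
  linarith

theorem stmt_12 (d k : ℕ) (hd : 2 ≤ d) (hdk : d < k) (x : Fin k → ℝ) (hx : StrictMono x)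
    (Q Q' : Polynomial ℝ) (hQ : IsExtremal d x Q) (hQ' : IsExtremal d x Q') :
    Q = Q' := by
  have hd1 : 1 ≤ d := le_trans one_le_two hd
  have hc : 0 < Q.leadingCoeff := lc_pos d k hd1 hdk x Q hQ
  have hlc : Q.leadingCoeff = Q'.leadingCoeff :=
    le_antisymm (hQ'.2.2 Q hQ.1 hQ.2.1) (hQ.2.2 Q' hQ'.1 hQ'.2.1)
  set M : Polynomial ℝ := Polynomial.C (1/2 : ℝ) * (Q + Q') with hM
  have hMcoeff : M.coeff d = Q.leadingCoeff := by
    have e1 : Q.coeff d = Q.leadingCoeff := by rw [Polynomial.leadingCoeff, hQ.1]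
    have e2 : Q'.coeff d = Q.leadingCoeff := by rw [hlc, Polynomial.leadingCoeff, hQ'.1]
    rw [hM, coeff_C_mul, coeff_add, e1, e2]
    ring
  have hMnd : M.natDegree = d := by
    have h1 : M.natDegree ≤ d := by
      apply le_trans (natDegree_C_mul_le _ _)
      apply le_trans (natDegree_add_le _ _)
      simp [hQ.1, hQ'.1]
    have h2 : d ≤ M.natDegree := le_natDegree_of_ne_zero (by rw [hMcoeff]; exact ne_of_gt hc)
    omega
  have hMbd : ∀ i : Fin k, |M.eval (x i)| ≤ 1 := by
    intro i
    rw [hM, eval_mul, eval_C, eval_add, abs_mul]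
    have := hQ.2.1 i; have := hQ'.2.1 i
    have h := abs_add_le (Q.eval (x i)) (Q'.eval (x i))
    rw [abs_of_pos (by norm_num : (0:ℝ) < 1/2)]
    linarith
  have hMlc : Q.leadingCoeff ≤ M.leadingCoeff := by
    have : M.leadingCoeff = Q.leadingCoeff := by
      rw [Polynomial.leadingCoeff, hMnd, hMcoeff]
    exact this.ge
  have hMext : IsExtremal d x M := by
    refine ⟨hMnd, hMbd, fun R hR1 hR2 => le_trans (hQ.2.2 R hR1 hR2) hMlc⟩
  have hmany := many_points d k hd1 hdk x M hMext
  set S := Finset.univ.filter (fun i : Fin k => |M.eval (x i)| = 1) with hS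
  -- at each point of S, Q and Q' agree
  have hagree : ∀ i ∈ S, Q.eval (x i) = Q'.eval (x i) := by
    intro i hi
    rw [hS, Finset.mem_filter] at hi
    have h1 : |M.eval (x i)| = 1 := hi.2
    have h2 := hQ.2.1 i; have h3 := hQ'.2.1 i
    rw [hM, eval_mul, eval_C, eval_add] at h1
    rw [abs_le] at h2 h3
    rcases abs_eq (by norm_num : (0:ℝ) ≤ 1) |>.mp h1 with h4 | h4 <;> linarith
  by_contra hne
  have hsub : Q - Q' ≠ 0 := sub_ne_zero.mpr hne
  have hroots : (S.image x) ⊆ (Q - Q').roots.toFinset := by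
    intro y hy
    rw [Finset.mem_image] at hy
    obtain ⟨i, hi, rfl⟩ := hy
    rw [Multiset.mem_toFinset, mem_roots hsub]
    simp [IsRoot, hagree i hi]
  have hcard1 : S.card = (S.image x).card :=
    (Finset.card_image_of_injective S hx.injective).symm
  have hcard2 : (Q - Q').roots.toFinset.card ≤ (Q - Q').roots.card :=
    Multiset.toFinset_card_le _
  have hcard3 : ((Q - Q').roots.card : ℕ) ≤ (Q - Q').natDegree := by
    exact_mod_cast (Polynomial.card_roots' (Q - Q'))
  have hcard4 : (Q - Q').natDegree ≤ d := by
    apply le_trans (natDegree_sub_le _ _)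
    simp [hQ.1, hQ'.1]
  have := Finset.card_le_card hroots
  omega
end

section
/- Let k > 2 be an integer. If Q is a real polynomial of degree 2 that is extremal for (2, {1,2,...,k}), then the leading coefficient of Q equals 8/(k−1)^2 when k is odd, and equals 8/(k(k−2)) when k is even. -/
/-!
The upper bound comes from the second divided difference: if `|Q| ≤ 1` at nodes `x < y < z`,
then the leading coefficient of the quadratic `Q` is at most `2 / ((y - x) (z - y))`, which for
the nodes `1, m, k` with `m` as central as possible gives `8 / (k - 1)²` resp. `8 / (k (k - 2))`.
The bound is attained by the parabola `a (X - (k + 1) / 2)² + e` centred at the midpoint and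
shifted so that it oscillates between `-1` and `1`; for even `k` the midpoint is not a node, which
gains the extra `1 / 4`.
-/

/-- `Q` is extremal for `(d, {1, 2, ..., k})`: it has degree `d`, is bounded in absolute
value by `1` at the integer points `1, ..., k`, and its leading coefficient is maximal among
all degree `d` polynomials bounded in absolute value by `1` at these points. -/
def IsExtremalOnRange (d k : ℕ) (Q : Polynomial ℝ) : Prop :=
  Q.natDegree = d ∧ (∀ j : ℕ, 1 ≤ j → j ≤ k → |Q.eval (j : ℝ)| ≤ 1) ∧
    ∀ R : Polynomial ℝ, R.natDegree = d → (∀ j : ℕ, 1 ≤ j → j ≤ k → |R.eval (j : ℝ)| ≤ 1) →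
      R.leadingCoeff ≤ Q.leadingCoeff

open Polynomial

namespace Polynomial

theorem eval_eq_of_natDegree_le_two {Q : ℝ[X]} (hQ : Q.natDegree ≤ 2) (x : ℝ) :
    Q.eval x = Q.coeff 0 + Q.coeff 1 * x + Q.coeff 2 * x ^ 2 := by
  rw [eval_eq_sum_range' (Nat.lt_succ_of_le hQ)]
  simp [Finset.sum_range_succ]

theorem coeff_two_eq_dividedDifference {Q : ℝ[X]} (hQ : Q.natDegree ≤ 2) {x y z : ℝ}
    (hxy : x ≠ y) (hxz : x ≠ z) (hyz : y ≠ z) :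
    Q.coeff 2 = Q.eval x / ((y - x) * (z - x)) - Q.eval y / ((y - x) * (z - y))
      + Q.eval z / ((z - x) * (z - y)) := by
  have := sub_ne_zero.mpr hxy.symm
  have := sub_ne_zero.mpr hxz.symm
  have := sub_ne_zero.mpr hyz.symm
  simp only [eval_eq_of_natDegree_le_two hQ]
  field_simp
  ring

theorem coeff_two_le_of_abs_eval_le_one {Q : ℝ[X]} (hQ : Q.natDegree ≤ 2) {x y z : ℝ}
    (hxy : x < y) (hyz : y < z) (hx : |Q.eval x| ≤ 1) (hy : |Q.eval y| ≤ 1)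
    (hz : |Q.eval z| ≤ 1) :
    Q.coeff 2 ≤ 2 / ((y - x) * (z - y)) := by
  have hyx := sub_pos.mpr hxy
  have hzy := sub_pos.mpr hyz
  have hzx := sub_pos.mpr (hxy.trans hyz)
  rw [coeff_two_eq_dividedDifference hQ hxy.ne (hxy.trans hyz).ne hyz.ne]
  calc Q.eval x / ((y - x) * (z - x)) - Q.eval y / ((y - x) * (z - y))
        + Q.eval z / ((z - x) * (z - y))
      ≤ 1 / ((y - x) * (z - x)) + 1 / ((y - x) * (z - y)) + 1 / ((z - x) * (z - y)) := by
        rw [sub_eq_add_neg, ← neg_div]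
        gcongr
        exacts [(abs_le.mp hx).2, neg_le.mp (abs_le.mp hy).1, (abs_le.mp hz).2]
    _ = 2 / ((y - x) * (z - y)) := by
        field_simp
        ring

end Polynomial

theorem sq_sub_midpoint_le {a b x : ℝ} (hax : a ≤ x) (hxb : x ≤ b) :
    (x - (a + b) / 2) ^ 2 ≤ ((b - a) / 2) ^ 2 := by
  nlinarith [mul_nonneg (sub_nonneg.mpr hax) (sub_nonneg.mpr hxb)]

theorem one_div_four_le_sq_sub_half_of_even {k : ℕ} (hk : Even k) (j : ℕ) :
    1 / 4 ≤ ((j : ℝ) - ((k : ℝ) + 1) / 2) ^ 2 := by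
  obtain ⟨t, rfl⟩ := hk
  have hsq : (1 : ℤ) ≤ (2 * j - 2 * t - 1) ^ 2 := by
    have := Int.one_le_abs (show (2 * j - 2 * t - 1 : ℤ) ≠ 0 by omega)
    nlinarith [sq_abs (2 * j - 2 * t - 1 : ℤ)]
  have : (1 : ℝ) ≤ (2 * j - 2 * t - 1) ^ 2 := by exact_mod_cast hsq
  push_cast
  nlinarith

namespace IsExtremalOnRange

variable {k : ℕ} {Q : ℝ[X]}

theorem leadingCoeff_le (hQ : IsExtremalOnRange 2 k Q) {m : ℕ} (h1m : 1 < m) (hmk : m < k) :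
    Q.leadingCoeff ≤ 2 / (((m : ℝ) - 1) * ((k : ℝ) - m)) := by
  obtain ⟨hdeg, hbound, -⟩ := hQ
  rw [leadingCoeff, hdeg]
  have := hbound 1 le_rfl (by omega)
  push_cast at this
  exact coeff_two_le_of_abs_eval_le_one hdeg.le (by exact_mod_cast h1m) (by exact_mod_cast hmk)
    this (hbound m h1m.le hmk.le) (hbound k (by omega) le_rfl)

/-- The competitor is the parabola `a (X - (k + 1) / 2)² - 1 - a m`. -/
theorem le_leadingCoeff (hQ : IsExtremalOnRange 2 k Q) {a m : ℝ} (ha : 0 < a)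
    (hm : ∀ j : ℕ, 1 ≤ j → j ≤ k → m ≤ ((j : ℝ) - ((k : ℝ) + 1) / 2) ^ 2)
    (hspread : a * ((((k : ℝ) - 1) / 2) ^ 2 - m) ≤ 2) :
    a ≤ Q.leadingCoeff := by
  set R : ℝ[X] := C a * X ^ 2 + C (-(a * (k + 1))) * X + C (a * ((k + 1) / 2) ^ 2 - 1 - a * m)
  have hbound : ∀ j : ℕ, 1 ≤ j → j ≤ k → |R.eval (j : ℝ)| ≤ 1 := by
    intro j h1j hjk
    have hupper := sq_sub_midpoint_le (x := (j : ℝ)) (a := 1) (b := k) (by exact_mod_cast h1j)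
      (by exact_mod_cast hjk)
    have hlower := hm j h1j hjk
    have hR : R.eval (j : ℝ) = a * (((j : ℝ) - ((k : ℝ) + 1) / 2) ^ 2 - m) - 1 := by
      simp only [R, eval_add, eval_mul, eval_C, eval_pow, eval_X]
      ring
    rw [hR, abs_le]
    constructor <;> nlinarith
  have := hQ.2.2 R (natDegree_quadratic ha.ne') hbound
  rwa [leadingCoeff_quadratic ha.ne'] at this

end IsExtremalOnRange

theorem stmt_15 (k : ℕ) (hk : 2 < k) (Q : Polynomial ℝ) (hQ : IsExtremalOnRange 2 k Q) :
    (Odd k → Q.leadingCoeff = 8 / ((k : ℝ) - 1) ^ 2) ∧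
    (Even k → Q.leadingCoeff = 8 / ((k : ℝ) * ((k : ℝ) - 2))) := by
  constructor
  · rintro ⟨t, ht⟩
    have : (t : ℝ) ≠ 0 := by exact_mod_cast (show t ≠ 0 by omega)
    have hkt : (k : ℝ) - 1 = 2 * t := by rw [ht]; push_cast; ring
    apply le_antisymm
    · calc Q.leadingCoeff ≤ 2 / ((((t + 1 : ℕ) : ℝ) - 1) * ((k : ℝ) - (t + 1 : ℕ))) :=
            hQ.leadingCoeff_le (by omega) (by omega)
        _ = 2 / ((t : ℝ) * t) := by rw [ht]; push_cast; ring_nf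
        _ = 8 / ((k : ℝ) - 1) ^ 2 := by rw [hkt]; field_simp; ring
    · refine hQ.le_leadingCoeff (by rw [hkt]; positivity) (fun j _ _ => sq_nonneg _) ?_
      exact le_of_eq (by rw [hkt]; field_simp; ring)
  · rintro ⟨t, ht⟩
    have ht1 : (1 : ℝ) < t := by exact_mod_cast (show 1 < t by omega)
    have hkt : (k : ℝ) = 2 * t := by rw [ht]; push_cast; ring
    have : (t : ℝ) - 1 ≠ 0 := by linarith
    apply le_antisymm
    · calc Q.leadingCoeff ≤ 2 / (((t : ℝ) - 1) * ((k : ℝ) - t)) :=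
            hQ.leadingCoeff_le (by omega) (by omega)
        _ = 8 / ((k : ℝ) * ((k : ℝ) - 2)) := by
            rw [hkt]; field_simp; ring
    · refine hQ.le_leadingCoeff (by rw [hkt]; apply div_pos <;> nlinarith)
        (fun j _ _ => one_div_four_le_sq_sub_half_of_even ⟨t, ht⟩ j) ?_
      exact le_of_eq (by rw [hkt]; field_simp; ring)
end
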